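/- arXiv:1108.4953 — 3 statements merged into one kernel-verified Lean document; each statement's English description precedes it below -/
import Mathlib

section
/- For every graph G and every positive integer r, the Hadwiger number of the complete blow-up satisfies h(G[r]) = r · h_r(G). -/
/-!
A clique minor of `G[r]` projects onto `G` as a family of connected, pairwise touching vertex
sets in which every vertex `v` lies in at most `r` members, because disjoint branch sets meet the
`r` copies of `v` in disjoint sets. Conversely, such a family lifts to a clique minor of `G[r]` by
giving the members through `v` pairwise distinct copies of `v`; touching members then become
adjacent. Families of size `t` of this kind are the `r`-integral bramble weightings of total
weight `t / r`.
-/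

open Finset

/-- Any two members of a bramble either share a vertex or are joined by an edge,
and each member induces a connected subgraph. -/
def IsBramble {V : Type} (G : SimpleGraph V) (B : Finset (Finset V)) : Prop :=
  (∀ A ∈ B, (G.induce (A : Set V)).Connected) ∧
    ∀ A ∈ B, ∀ A' ∈ B, (∃ v, v ∈ A ∧ v ∈ A') ∨ ∃ a ∈ A, ∃ b ∈ A', G.Adj a b

/-- A strong bramble: any two (possibly equal) members are joined by an edge. -/
def IsStrongBramble {V : Type} (G : SimpleGraph V) (B : Finset (Finset V)) : Prop :=
  (∀ A ∈ B, (G.induce (A : Set V)).Connected) ∧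
    ∀ A ∈ B, ∀ A' ∈ B, ∃ a ∈ A, ∃ b ∈ A', G.Adj a b

/-- A valid weighting: nonnegative weights whose total at every vertex is at most 1. -/
def IsValidWeight {V : Type} [DecidableEq V] (B : Finset (Finset V)) (w : Finset V → ℝ) : Prop :=
  (∀ A ∈ B, 0 ≤ w A) ∧ ∀ v : V, ∑ A ∈ B.filter (fun A => v ∈ A), w A ≤ 1

/-- The fractional Hadwiger number. -/
noncomputable def fracHadwiger {V : Type} [Fintype V] [DecidableEq V] (G : SimpleGraph V) : ℝ :=
  sSup {h : ℝ | ∃ B : Finset (Finset V), ∃ w : Finset V → ℝ,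
    IsBramble G B ∧ IsValidWeight B w ∧ h = ∑ A ∈ B, w A}

/-- The r-integral Hadwiger number: all weights multiples of 1/r. -/
noncomputable def rIntHadwiger {V : Type} [Fintype V] [DecidableEq V]
    (G : SimpleGraph V) (r : ℕ) : ℝ :=
  sSup {h : ℝ | ∃ B : Finset (Finset V), ∃ w : Finset V → ℝ,
    IsBramble G B ∧ IsValidWeight B w ∧ (∀ A ∈ B, ∃ k : ℕ, w A = k / r) ∧
    h = ∑ A ∈ B, w A}

/-- The lower fractional Hadwiger number (using strong brambles). -/
noncomputable def lowerFracHadwiger {V : Type} [Fintype V] [DecidableEq V]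
    (G : SimpleGraph V) : ℝ :=
  sSup {h : ℝ | ∃ B : Finset (Finset V), ∃ w : Finset V → ℝ,
    IsStrongBramble G B ∧ IsValidWeight B w ∧ h = ∑ A ∈ B, w A}

/-- The lower r-integral Hadwiger number. -/
noncomputable def lowerRIntHadwiger {V : Type} [Fintype V] [DecidableEq V]
    (G : SimpleGraph V) (r : ℕ) : ℝ :=
  sSup {h : ℝ | ∃ B : Finset (Finset V), ∃ w : Finset V → ℝ,
    IsStrongBramble G B ∧ IsValidWeight B w ∧ (∀ A ∈ B, ∃ k : ℕ, w A = k / r) ∧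
    h = ∑ A ∈ B, w A}

/-- `G` has a clique minor of order `t`. -/
def HasCliqueMinor {V : Type} (G : SimpleGraph V) (t : ℕ) : Prop :=
  ∃ f : Fin t → Finset V,
    (∀ i, (f i).Nonempty) ∧
    (∀ i, (G.induce ((f i : Set V))).Connected) ∧
    (∀ i j, i ≠ j → Disjoint (f i) (f j)) ∧
    (∀ i j, i ≠ j → ∃ a ∈ f i, ∃ b ∈ f j, G.Adj a b)

/-- `G` has a clique minor of order `t` and breadth at most `d` (each part has ≤ d vertices). -/
def HasCliqueMinorBreadth {V : Type} (G : SimpleGraph V) (t : ℕ) (d : ℝ) : Prop :=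
  ∃ f : Fin t → Finset V,
    (∀ i, (f i).Nonempty) ∧
    (∀ i, (G.induce ((f i : Set V))).Connected) ∧
    (∀ i j, i ≠ j → Disjoint (f i) (f j)) ∧
    (∀ i j, i ≠ j → ∃ a ∈ f i, ∃ b ∈ f j, G.Adj a b) ∧
    (∀ i, ((f i).card : ℝ) ≤ d)

/-- The Hadwiger number: the largest order of a clique minor. -/
noncomputable def hadwigerNumber {V : Type} (G : SimpleGraph V) : ℕ :=
  sSup {t : ℕ | HasCliqueMinor G t}

/-- The lexicographic product of two graphs. -/
def lexProd {α β : Type} (G : SimpleGraph α) (H : SimpleGraph β) : SimpleGraph (α × β) where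
  Adj x y := G.Adj x.1 y.1 ∨ (x.1 = y.1 ∧ H.Adj x.2 y.2)
  symm := by
    constructor
    intro x y hxy
    rcases hxy with h | ⟨h1, h2⟩
    · exact Or.inl h.symm
    · exact Or.inr ⟨h1.symm, h2.symm⟩
  loopless := by
    constructor
    intro x hx
    rcases hx with h | ⟨_, h2⟩
    · exact G.irrefl h
    · exact H.irrefl h2

/-- The complete blow-up `G[r] = G · K_r`. -/
def completeBlowup {α : Type} (G : SimpleGraph α) (r : ℕ) : SimpleGraph (α × Fin r) :=
  lexProd G (⊤ : SimpleGraph (Fin r))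

/-- The blow-up `G(r) = G · I_r`. -/
def emptyBlowup {α : Type} (G : SimpleGraph α) (r : ℕ) : SimpleGraph (α × Fin r) :=
  lexProd G (⊥ : SimpleGraph (Fin r))

/-- `H` is a minor of `G`: branch sets indexed by the vertices of `H`. -/
def IsMinor {W V : Type} (H : SimpleGraph W) (G : SimpleGraph V) : Prop :=
  ∃ f : W → Finset V,
    (∀ u, (G.induce ((f u : Set V))).Connected) ∧
    (∀ u u', u ≠ u' → Disjoint (f u) (f u')) ∧
    (∀ u u', H.Adj u u' → ∃ a ∈ f u, ∃ b ∈ f u', G.Adj a b)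

/-- The k × k grid graph. -/
def gridGraph (k : ℕ) : SimpleGraph (Fin k × Fin k) where
  Adj a b := (a.1 = b.1 ∧ (a.2.val + 1 = b.2.val ∨ b.2.val + 1 = a.2.val)) ∨
             (a.2 = b.2 ∧ (a.1.val + 1 = b.1.val ∨ b.1.val + 1 = a.1.val))
  symm := by
    constructor
    intro a b hab
    rcases hab with ⟨h1, h2⟩ | ⟨h1, h2⟩
    · exact Or.inl ⟨h1.symm, h2.symm⟩
    · exact Or.inr ⟨h1.symm, h2.symm⟩
  loopless := by
    constructor
    intro a ha
    rcases ha with ⟨_, h | h⟩ | ⟨_, h | h⟩ <;> omega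

namespace SimpleGraph

variable {α β : Type*} {G : SimpleGraph α} {H : SimpleGraph β}

lemma Connected.of_surjective_of_adj_or_eq (f : α → β) (hf : Function.Surjective f)
    (hadj : ∀ a b, G.Adj a b → H.Adj (f a) (f b) ∨ f a = f b) (hG : G.Connected) :
    H.Connected := by
  have reach : ∀ {a b : α}, G.Walk a b → H.Reachable (f a) (f b) := by
    intro a b p
    induction p with
    | nil => exact .rfl
    | cons h _ ih => exact (hadj _ _ h).elim (fun h' => h'.reachable.trans ih) (· ▸ ih)
  have := hG.nonempty.map f
  refine ⟨fun x y => ?_⟩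
  obtain ⟨a, rfl⟩ := hf x
  obtain ⟨b, rfl⟩ := hf y
  exact reach (hG.preconnected a b).some

lemma induce_image_connected {s : Set α} (f : α → β)
    (hf : ∀ a ∈ s, ∀ b ∈ s, G.Adj a b → H.Adj (f a) (f b) ∨ f a = f b)
    (hs : (G.induce s).Connected) : (H.induce (f '' s)).Connected :=
  hs.of_surjective_of_adj_or_eq (s.imageFactorization f) Set.imageFactorization_surjective
    fun a b hab => (hf a a.2 b b.2 hab).imp id Subtype.ext

end SimpleGraph

lemma completeBlowup_adj {α : Type} (G : SimpleGraph α) (r : ℕ) (x y : α × Fin r) :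
    (completeBlowup G r).Adj x y ↔ G.Adj x.1 y.1 ∨ (x.1 = y.1 ∧ x.2 ≠ y.2) := by
  simp [completeBlowup, lexProd]

lemma hasCliqueMinor_zero {V : Type} (G : SimpleGraph V) : HasCliqueMinor G 0 :=
  ⟨fun i => i.elim0, fun i => i.elim0, fun i => i.elim0, fun i => i.elim0, fun i => i.elim0⟩

lemma hasCliqueMinor_of_fintype {V : Type} {ι : Type*} [Fintype ι] {G : SimpleGraph V}
    (f : ι → Finset V) (hconn : ∀ i, (G.induce (f i : Set V)).Connected)
    (hdisj : Pairwise fun i j => Disjoint (f i) (f j))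
    (hadj : Pairwise fun i j => ∃ a ∈ f i, ∃ b ∈ f j, G.Adj a b) :
    HasCliqueMinor G (Fintype.card ι) := by
  let e := (Fintype.equivFin ι).symm
  refine ⟨f ∘ e, fun i => ?_, fun i => hconn (e i), fun i j h => hdisj (e.injective.ne h),
    fun i j h => hadj (e.injective.ne h)⟩
  exact Finset.coe_nonempty.mp (Set.nonempty_coe_sort.mp (hconn (e i)).nonempty)

lemma HasCliqueMinor.le_card {V : Type} [Fintype V] {G : SimpleGraph V} {t : ℕ}
    (h : HasCliqueMinor G t) : t ≤ Fintype.card V := by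
  obtain ⟨f, hne, -, hdisj, -⟩ := h
  choose x hx using hne
  simpa using Fintype.card_le_of_injective x fun i j hij =>
    by_contra fun h => disjoint_left.mp (hdisj i j h) (hx i) (hij ▸ hx j)

lemma isGreatest_hadwigerNumber {V : Type} [Fintype V] (G : SimpleGraph V) :
    IsGreatest {t | HasCliqueMinor G t} (hadwigerNumber G) := by
  have hbdd : BddAbove {t | HasCliqueMinor G t} := ⟨Fintype.card V, fun _ h => h.le_card⟩
  exact ⟨Nat.sSup_mem ⟨0, hasCliqueMinor_zero G⟩ hbdd, fun _ h => le_csSup hbdd h⟩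

lemma Finset.exists_injOn_fin_of_card_le {ι : Type*} {s : Finset ι} {r : ℕ} (hr : 0 < r)
    (hs : #s ≤ r) : ∃ f : ι → Fin r, Set.InjOn f s := by
  have : Nonempty (Fin r) := ⟨⟨0, hr⟩⟩
  exact Set.exists_injOn_iff_injective.mpr
    ⟨Fin.castLE hs ∘ s.equivFin, (Fin.castLE_injective hs).comp s.equivFin.injective⟩

lemma Finset.card_filter_comp_eq_sum_card_fiber {ι β : Type*} [Fintype ι] [DecidableEq β]
    (P : ι → β) (p : β → Prop) [DecidablePred p] :
    #{i | p (P i)} = ∑ A ∈ (univ.image P).filter p, #{i | P i = A} := by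
  rw [filter_image (f := P), card_eq_sum_card_image P]
  refine sum_congr rfl fun A hA => ?_
  obtain ⟨j, hj, rfl⟩ := mem_image.mp hA
  rw [filter_filter]
  exact congrArg card
    (filter_congr fun i _ => ⟨And.right, fun h => ⟨h ▸ (mem_filter.mp hj).2, h⟩⟩)

lemma IsBramble.subset {V : Type} {G : SimpleGraph V} {B B' : Finset (Finset V)}
    (hB : IsBramble G B) (h : B' ⊆ B) : IsBramble G B' :=
  ⟨fun A hA => hB.1 A (h hA), fun A hA A' hA' => hB.2 A (h hA) A' (h hA')⟩

section Packing

variable {V : Type} [DecidableEq V] {G : SimpleGraph V} {r : ℕ}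

/-- An `r`-integral bramble weighting in multiplicity form: a member of weight `k / r` is
listed `k` times. -/
def IsBramblePacking {ι : Type*} [Fintype ι] (G : SimpleGraph V) (r : ℕ) (P : ι → Finset V) :
    Prop :=
  IsBramble G (univ.image P) ∧ ∀ v, #{i | v ∈ P i} ≤ r

lemma HasCliqueMinor.exists_isBramblePacking {t : ℕ}
    (h : HasCliqueMinor (completeBlowup G r) t) :
    ∃ P : Fin t → Finset V, IsBramblePacking G r P := by
  obtain ⟨f, hne, hconn, hdisj, hadj⟩ := h
  refine ⟨fun i => (f i).image Prod.fst, ⟨?_, ?_⟩, fun v => ?_⟩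
  · simp only [forall_mem_image, mem_univ, true_implies]
    intro i
    rw [coe_image]
    refine SimpleGraph.induce_image_connected Prod.fst (fun a _ b _ hab => ?_) (hconn i)
    exact ((completeBlowup_adj G r a b).mp hab).imp_right And.left
  · simp only [forall_mem_image, mem_univ, true_implies]
    intro i j
    by_cases hij : i = j
    · obtain ⟨a, ha⟩ := hne i
      exact .inl ⟨a.1, mem_image_of_mem _ ha, hij ▸ mem_image_of_mem _ ha⟩
    obtain ⟨a, ha, b, hb, hab⟩ := hadj i j hij
    rcases (completeBlowup_adj G r a b).mp hab with hab | ⟨hab, -⟩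
    · exact .inr ⟨a.1, mem_image_of_mem _ ha, b.1, mem_image_of_mem _ hb, hab⟩
    · exact .inl ⟨a.1, mem_image_of_mem _ ha, hab ▸ mem_image_of_mem _ hb⟩
  · calc #{i | v ∈ (f i).image Prod.fst} ≤ #(univ : Finset (Fin r)) := by
          refine card_le_card_of_forall_subsingleton (fun i c => (v, c) ∈ f i)
            (fun i hi => ?_) fun c _ i hi j hj => by_contra fun h =>
              disjoint_left.mp (hdisj i j h) hi.2 hj.2
          obtain ⟨x, hx, rfl⟩ := mem_image.mp (mem_filter.mp hi).2
          exact ⟨x.2, mem_univ _, hx⟩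
      _ = r := card_fin r

lemma IsBramblePacking.hasCliqueMinor_completeBlowup {ι : Type*} [Fintype ι] (hr : 0 < r)
    {P : ι → Finset V} (hP : IsBramblePacking G r P) :
    HasCliqueMinor (completeBlowup G r) (Fintype.card ι) := by
  obtain ⟨⟨hconn, htouch⟩, hcover⟩ := hP
  choose c hc using fun v => exists_injOn_fin_of_card_le hr (hcover v)
  have hc' : ∀ v i j, v ∈ P i → v ∈ P j → c v i = c v j → i = j :=
    fun v i j hi hj => hc v (by simpa using hi) (by simpa using hj)
  have hmem : ∀ i, P i ∈ univ.image P := fun i => mem_image_of_mem _ (mem_univ i)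
  refine hasCliqueMinor_of_fintype (fun i => (P i).image fun v => (v, c v i))
    (fun i => ?_) (fun i j hij => ?_) (fun i j hij => ?_)
  · rw [coe_image]
    exact SimpleGraph.induce_image_connected _
      (fun a _ b _ hab => .inl ((completeBlowup_adj G r _ _).mpr (.inl hab))) (hconn _ (hmem i))
  · refine disjoint_left.mpr fun x hx hx' => ?_
    obtain ⟨v, hv, rfl⟩ := mem_image.mp hx
    obtain ⟨u, hu, hvu⟩ := mem_image.mp hx'
    obtain ⟨rfl, hcv⟩ := Prod.mk.inj hvu
    exact hij (hc' u i j hv hu hcv.symm)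
  · rcases htouch _ (hmem i) _ (hmem j) with ⟨v, hvi, hvj⟩ | ⟨a, ha, b, hb, hab⟩
    · exact ⟨_, mem_image_of_mem _ hvi, _, mem_image_of_mem _ hvj,
        (completeBlowup_adj G r _ _).mpr (.inr ⟨rfl, fun h => hij (hc' v i j hvi hvj h)⟩)⟩
    · exact ⟨_, mem_image_of_mem _ ha, _, mem_image_of_mem _ hb,
        (completeBlowup_adj G r _ _).mpr (.inl hab)⟩

lemma IsBramblePacking.exists_weighting {ι : Type*} [Fintype ι] (hr : 0 < r)
    {P : ι → Finset V} (hP : IsBramblePacking G r P) :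
    ∃ B : Finset (Finset V), ∃ w : Finset V → ℝ, IsBramble G B ∧ IsValidWeight B w ∧
      (∀ A ∈ B, ∃ k : ℕ, w A = k / r) ∧
      (Fintype.card ι : ℝ) / r = ∑ A ∈ B, w A := by
  have hr' : (0 : ℝ) < r := Nat.cast_pos.mpr hr
  refine ⟨univ.image P, fun A => (#{i | P i = A} : ℝ) / r, hP.1,
    ⟨fun _ _ => by positivity, fun v => ?_⟩, fun A _ => ⟨_, rfl⟩, ?_⟩
  · rw [← sum_div, ← Nat.cast_sum, ← card_filter_comp_eq_sum_card_fiber, div_le_one hr']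
    exact_mod_cast hP.2 v
  · rw [← sum_div, ← Nat.cast_sum, ← card_univ, card_eq_sum_card_image P univ]

lemma IsBramble.exists_packing_of_weighting (hr : 0 < r) {B : Finset (Finset V)}
    {w : Finset V → ℝ} (hB : IsBramble G B) (hw : IsValidWeight B w)
    (hmul : ∀ A ∈ B, ∃ k : ℕ, w A = k / r) :
    ∃ (ι : Type) (_ : Fintype ι) (P : ι → Finset V), IsBramblePacking G r P ∧
      ∑ A ∈ B, w A = (Fintype.card ι : ℝ) / r := by
  choose! k hk using hmul
  have hkw : ∀ A ∈ B, (k A : ℝ) = r * w A := fun A hA => by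
    rw [hk A hA]
    field_simp
  refine ⟨Σ A : B, Fin (k A), inferInstance, fun σ => σ.1,
    ⟨hB.subset (image_subset_iff.mpr fun σ _ => σ.1.2), fun v => ?_⟩, ?_⟩
  · have hcount :
        #{σ : Σ A : B, Fin (k A) | v ∈ (σ.1 : Finset V)} = ∑ A ∈ B with v ∈ A, k A := by
      rw [card_filter, Fintype.sum_sigma, sum_filter, ← sum_coe_sort B]
      refine sum_congr rfl fun A _ => ?_
      by_cases h : v ∈ (A : Finset V) <;> simp [h]
    have hsum : (∑ A ∈ B with v ∈ A, k A : ℝ) ≤ r := calc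
      (∑ A ∈ B with v ∈ A, k A : ℝ) = r * ∑ A ∈ B with v ∈ A, w A := by
          rw [mul_sum]
          exact sum_congr rfl fun A hA => hkw A (mem_filter.mp hA).1
      _ ≤ r * 1 := by gcongr; exact hw.2 v
      _ = r := mul_one _
    rw [hcount]
    exact_mod_cast hsum
  · rw [Fintype.card_sigma]
    simp only [Fintype.card_fin]
    rw [sum_coe_sort B k, Nat.cast_sum, sum_div]
    exact sum_congr rfl hk

lemma rIntHadwiger_eq_sSup_image [Fintype V] (hr : 0 < r) :
    rIntHadwiger G r =
      sSup ((fun t : ℕ => (t : ℝ) / r) '' {t | HasCliqueMinor (completeBlowup G r) t}) := by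
  rw [rIntHadwiger]
  congr 1
  ext h
  constructor
  · rintro ⟨B, w, hB, hw, hmul, rfl⟩
    obtain ⟨ι, _, P, hP, hsum⟩ := hB.exists_packing_of_weighting hr hw hmul
    exact ⟨_, hP.hasCliqueMinor_completeBlowup hr, hsum.symm⟩
  · rintro ⟨t, ht, rfl⟩
    obtain ⟨P, hP⟩ := ht.exists_isBramblePacking
    simpa using hP.exists_weighting hr

end Packing

/-- `h(G[r]) = r · h_r(G)`. -/
theorem hadwiger_completeBlowup_eq
    {V : Type} [Fintype V] [DecidableEq V] (G : SimpleGraph V) (r : ℕ) (hr : 0 < r) :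
    (hadwigerNumber (completeBlowup G r) : ℝ) = (r : ℝ) * rIntHadwiger G r := by
  have hr' : (0 : ℝ) < r := Nat.cast_pos.mpr hr
  have hmono : Monotone fun t : ℕ => (t : ℝ) / r := fun _ _ hab => by dsimp only; gcongr
  rw [rIntHadwiger_eq_sSup_image hr,
    (hmono.map_isGreatest (isGreatest_hadwigerNumber (completeBlowup G r))).csSup_eq]
  field_simp
end

section
/- For every positive integer k, the k × k grid graph G satisfies h_2(G) ≥ k/2, where h_2 is the 2-integral Hadwiger number; in particular the fractional Hadwiger number of the k × k grid graph is at least k/2. -/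
open Finset

/-!
The hooks `H i = row i ∪ column i` of the grid are connected (the grid is the box product of two
paths, and `H i` is a copy of each factor glued at `(i, i)`), any two of them meet
(`(i, j) ∈ H i ∩ H j`), and a vertex `(a, b)` lies only in `H a` and `H b`. Hence weight `1/2` on
every hook is a valid weighting of a bramble, of total weight `k / 2`.
-/

open SimpleGraph

theorem SimpleGraph.Embedding.preconnected_induce_range {α β : Type*} {G : SimpleGraph α}
    {G' : SimpleGraph β} (f : G ↪g G') (hG : G.Preconnected) :
    (G'.induce (Set.range f)).Preconnected :=
  f.isoInduceRange.preconnected_iff.mp hG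

theorem SimpleGraph.connected_induce_boxProd_cross {α β : Type*} {G : SimpleGraph α}
    {H : SimpleGraph β} (hG : G.Preconnected) (hH : H.Preconnected) (a : α) (b : β) :
    ((G □ H).induce {p | p.1 = a ∨ p.2 = b}).Connected := by
  have hcross : {p : α × β | p.1 = a ∨ p.2 = b} =
      Set.range (boxProdRight G H a) ∪ Set.range (boxProdLeft G H b) := by
    ext ⟨x, y⟩
    simp [eq_comm]
  rw [hcross]
  exact induce_union_connected ((boxProdRight G H a).preconnected_induce_range hH)
    ((boxProdLeft G H b).preconnected_induce_range hG) ⟨(a, b), by simp, by simp⟩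

theorem gridGraph_eq_boxProd (k : ℕ) : gridGraph k = pathGraph k □ pathGraph k := by
  ext p q
  simp only [gridGraph, boxProd_adj, pathGraph_adj]
  tauto

section Bramble

variable {V : Type} [DecidableEq V] {G : SimpleGraph V}
  {B : Finset (Finset V)} {w : Finset V → ℝ}

theorem IsBramble.sum_le_card [Fintype V] (hB : IsBramble G B) (hw : IsValidWeight B w) :
    ∑ A ∈ B, w A ≤ Fintype.card V := by
  have hA : ∀ A ∈ B, w A ≤ ∑ _v ∈ A, w A := fun A hA_mem => by
    obtain ⟨⟨v, hv⟩⟩ := (hB.1 A hA_mem).nonempty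
    rw [sum_const, nsmul_eq_mul]
    exact le_mul_of_one_le_left (hw.1 A hA_mem) (by exact_mod_cast card_pos.mpr ⟨v, hv⟩)
  calc ∑ A ∈ B, w A ≤ ∑ A ∈ B, ∑ _v ∈ A, w A := sum_le_sum hA
    _ = ∑ v : V, ∑ A ∈ B.filter (fun A => v ∈ A), w A := by
      rw [sum_comm' (t' := univ) (s' := fun v => B.filter (fun A => v ∈ A))]
      simp
    _ ≤ ∑ _v : V, 1 := sum_le_sum fun v _ => hw.2 v
    _ = Fintype.card V := by simp

theorem le_fracHadwiger [Fintype V] (hB : IsBramble G B) (hw : IsValidWeight B w) :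
    ∑ A ∈ B, w A ≤ fracHadwiger G :=
  le_csSup ⟨Fintype.card V, by rintro _ ⟨B, w, hB, hw, rfl⟩; exact hB.sum_le_card hw⟩
    ⟨B, w, hB, hw, rfl⟩

theorem le_rIntHadwiger [Fintype V] (r : ℕ) (hB : IsBramble G B) (hw : IsValidWeight B w)
    (hr : ∀ A ∈ B, ∃ m : ℕ, w A = m / r) : ∑ A ∈ B, w A ≤ rIntHadwiger G r :=
  le_csSup ⟨Fintype.card V, by rintro _ ⟨B, w, hB, hw, -, rfl⟩; exact hB.sum_le_card hw⟩
    ⟨B, w, hB, hw, hr, rfl⟩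

theorem isValidWeight_const_inv {r : ℕ} (hr : ∀ v, #(B.filter (fun A => v ∈ A)) ≤ r) :
    IsValidWeight B (fun _ => (r : ℝ)⁻¹) := by
  refine ⟨fun _ _ => by positivity, fun v => ?_⟩
  rw [sum_const, nsmul_eq_mul, ← div_eq_mul_inv]
  exact div_le_one_of_le₀ (by exact_mod_cast hr v) r.cast_nonneg

end Bramble

def hook (k : ℕ) (i : Fin k) : Finset (Fin k × Fin k) :=
  {p | p.1 = i ∨ p.2 = i}

@[simp]
theorem mem_hook {k : ℕ} {i : Fin k} {p : Fin k × Fin k} : p ∈ hook k i ↔ p.1 = i ∨ p.2 = i := by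
  simp [hook]

theorem hook_injective (k : ℕ) : Function.Injective (hook k) := by
  intro i j hij
  have : (i, i) ∈ hook k j := hij ▸ mem_hook.mpr (Or.inl rfl)
  simpa using this

theorem connected_induce_hook (k : ℕ) (i : Fin k) :
    ((gridGraph k).induce (hook k i : Set (Fin k × Fin k))).Connected := by
  have hcoe : (hook k i : Set (Fin k × Fin k)) = {p | p.1 = i ∨ p.2 = i} := by ext; simp
  rw [gridGraph_eq_boxProd, hcoe]
  exact connected_induce_boxProd_cross (pathGraph_preconnected k) (pathGraph_preconnected k) i i

def hooks (k : ℕ) : Finset (Finset (Fin k × Fin k)) :=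
  univ.map ⟨hook k, hook_injective k⟩

theorem isBramble_hooks (k : ℕ) : IsBramble (gridGraph k) (hooks k) := by
  simp only [IsBramble, hooks, forall_mem_map, mem_univ, forall_const,
    Function.Embedding.coeFn_mk]
  exact ⟨connected_induce_hook k, fun i j => Or.inl ⟨(i, j), by simp, by simp⟩⟩

theorem card_filter_mem_hooks_le_two (k : ℕ) (v : Fin k × Fin k) :
    #((hooks k).filter (fun A => v ∈ A)) ≤ 2 := by
  have hsub : (hooks k).filter (fun A => v ∈ A) ⊆ {hook k v.1, hook k v.2} := by
    intro A hA
    simp only [hooks, mem_filter, mem_map, mem_univ, true_and, Function.Embedding.coeFn_mk] at hA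
    obtain ⟨⟨i, rfl⟩, hv⟩ := hA
    rcases mem_hook.mp hv with rfl | rfl <;> simp
  exact (card_le_card hsub).trans card_le_two

theorem gridGraph_rIntHadwiger_two_general
    (k : ℕ) :
    (k : ℝ) / 2 ≤ rIntHadwiger (gridGraph k) 2 ∧ (k : ℝ) / 2 ≤ fracHadwiger (gridGraph k) := by
  have hB := isBramble_hooks k
  have hw := isValidWeight_const_inv (card_filter_mem_hooks_le_two k)
  have hsum : ∑ _A ∈ hooks k, ((2 : ℕ) : ℝ)⁻¹ = (k : ℝ) / 2 := by
    simp [hooks, div_eq_mul_inv]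
  rw [← hsum]
  exact ⟨le_rIntHadwiger 2 hB hw fun _ _ => ⟨1, by simp⟩, le_fracHadwiger hB hw⟩

/-- the k × k grid graph `G` satisfies `h_2(G) ≥ k/2`, and in particular
`h_f(G) ≥ k/2`. -/
theorem gridGraph_rIntHadwiger_two
    (k : ℕ) (hk : 0 < k) :
    (k : ℝ) / 2 ≤ rIntHadwiger (gridGraph k) 2 ∧ (k : ℝ) / 2 ≤ fracHadwiger (gridGraph k) :=
  gridGraph_rIntHadwiger_two_general k
end

section
/- Let G be a graph on n vertices, let d be a positive integer, and suppose that every clique minor in G of breadth at most d has order at most s. Then the fractional Hadwiger number satisfies h_f(G) ≤ n/d + d·s. -/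
open Finset

/-! Split the bramble into members with at most `d` vertices and larger ones. Counting each
member once per vertex shows that the weight on the large members is at most `n / d`. Among the
small members choose greedily a pairwise disjoint subfamily `T` meeting all of them; since any two
members of a bramble touch, `T` is a clique minor of breadth at most `d`, so `#T ≤ s`. Every small
member meets the at most `d * s` vertices covered by `T`, and each vertex carries total weight at
most one, so the small members weigh at most `d * s`. -/

theorem Finset.exists_pairwiseDisjoint_subset_forall_not_disjoint {α : Type*} [DecidableEq α]
    (S : Finset (Finset α)) (hS : ∀ A ∈ S, A.Nonempty) :
    ∃ T ⊆ S, (T : Set (Finset α)).PairwiseDisjoint id ∧ ∀ A ∈ S, ∃ C ∈ T, ¬Disjoint A C := by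
  induction S using Finset.induction_on with
  | empty => exact ⟨∅, subset_refl _, by simp, by simp⟩
  | insert A S _ ih =>
    obtain ⟨T, hTS, hTdisj, hThit⟩ := ih fun B hB => hS B (mem_insert_of_mem hB)
    by_cases hA : ∃ C ∈ T, ¬Disjoint A C
    · refine ⟨T, hTS.trans (subset_insert A S), hTdisj, fun B hB => ?_⟩
      rcases mem_insert.mp hB with rfl | hB
      exacts [hA, hThit B hB]
    · push Not at hA
      refine ⟨insert A T, insert_subset_insert A hTS, ?_, fun B hB => ?_⟩
      · rw [coe_insert]
        exact hTdisj.insert fun C hC _ => hA C hC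
      · rcases mem_insert.mp hB with rfl | hB
        · refine ⟨B, mem_insert_self B T, ?_⟩
          rw [disjoint_self_iff_empty]
          exact (hS B (mem_insert_self B S)).ne_empty
        · obtain ⟨C, hC, hBC⟩ := hThit B hB
          exact ⟨C, mem_insert_of_mem hC, hBC⟩

section Bramble

variable {V : Type} {G : SimpleGraph V} {B : Finset (Finset V)}

theorem IsBramble.nonempty_of_mem (hB : IsBramble G B) {A : Finset V} (hA : A ∈ B) :
    A.Nonempty := by
  obtain ⟨⟨v, hv⟩⟩ := (hB.1 A hA).nonempty
  exact ⟨v, hv⟩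

/-- Disjoint members of a bramble cannot share a vertex, so they must be joined by an edge. -/
theorem IsBramble.hasCliqueMinorBreadth (hB : IsBramble G B) {T : Finset (Finset V)}
    (hTB : T ⊆ B) (hT : (T : Set (Finset V)).PairwiseDisjoint id) {d : ℝ}
    (hcard : ∀ A ∈ T, (#A : ℝ) ≤ d) : HasCliqueMinorBreadth G #T d := by
  set f : Fin #T → Finset V := fun i => T.equivFin.symm i
  have hfT : ∀ i, f i ∈ T := fun i => (T.equivFin.symm i).2
  have hf_disj : ∀ i j, i ≠ j → Disjoint (f i) (f j) := fun i j hij =>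
    hT (hfT i) (hfT j) fun h => hij (T.equivFin.symm.injective (Subtype.ext h))
  refine ⟨f, fun i => hB.nonempty_of_mem (hTB (hfT i)), fun i => hB.1 _ (hTB (hfT i)),
    hf_disj, fun i j hij => ?_, fun i => hcard _ (hfT i)⟩
  rcases hB.2 _ (hTB (hfT i)) _ (hTB (hfT j)) with ⟨v, hvi, hvj⟩ | hadj
  · exact absurd hvj (disjoint_left.mp (hf_disj i j hij) hvi)
  · exact hadj

end Bramble

namespace IsValidWeight

variable {V : Type} [DecidableEq V] {B S : Finset (Finset V)} {w : Finset V → ℝ}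

theorem sum_mul_card_inter_le (hw : IsValidWeight B w) (hS : S ⊆ B) (X : Finset V) :
    ∑ A ∈ S, w A * #(A ∩ X) ≤ #X :=
  calc ∑ A ∈ S, w A * #(A ∩ X)
      ≤ ∑ A ∈ B, w A * #(A ∩ X) :=
        sum_le_sum_of_subset_of_nonneg hS fun A hA _ => mul_nonneg (hw.1 A hA) (Nat.cast_nonneg _)
    _ = ∑ A ∈ B, ∑ _v ∈ A ∩ X, w A := by simp only [sum_const, nsmul_eq_mul, mul_comm]
    _ = ∑ v ∈ X, ∑ A ∈ B.filter (fun A => v ∈ A), w A :=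
        sum_comm' fun A v => by simp only [mem_inter, mem_filter]; tauto
    _ ≤ ∑ _v ∈ X, (1 : ℝ) := sum_le_sum fun v _ => hw.2 v
    _ = #X := by simp

theorem sum_le_card_of_forall_not_disjoint (hw : IsValidWeight B w) (hS : S ⊆ B)
    {X : Finset V} (hX : ∀ A ∈ S, ¬Disjoint A X) : ∑ A ∈ S, w A ≤ #X :=
  calc ∑ A ∈ S, w A
      ≤ ∑ A ∈ S, w A * #(A ∩ X) := sum_le_sum fun A hA =>
        le_mul_of_one_le_right (hw.1 A (hS hA))
          (by exact_mod_cast card_pos.mpr (not_disjoint_iff_nonempty_inter.mp (hX A hA)))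
    _ ≤ #X := hw.sum_mul_card_inter_le hS X

theorem mul_sum_le_card_of_le_card [Fintype V] (hw : IsValidWeight B w) (hS : S ⊆ B) {d : ℕ}
    (hd : ∀ A ∈ S, d ≤ #A) : d * ∑ A ∈ S, w A ≤ Fintype.card V :=
  calc d * ∑ A ∈ S, w A
      ≤ ∑ A ∈ S, w A * #(A ∩ univ) := by
        rw [mul_sum]
        refine sum_le_sum fun A hA => ?_
        rw [inter_univ, mul_comm]
        exact mul_le_mul_of_nonneg_left (by exact_mod_cast hd A hA) (hw.1 A (hS hA))
    _ ≤ #(univ : Finset V) := hw.sum_mul_card_inter_le hS univ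
    _ = Fintype.card V := by rw [card_univ]

end IsValidWeight

/-- if every clique minor in `G` of breadth at most `d` has order at most `s`,
then `h_f(G) ≤ n/d + d·s`. -/
theorem fracHadwiger_le_of_breadth_bound
    {V : Type} [Fintype V] [DecidableEq V] (G : SimpleGraph V)
    (d : ℕ) (hd : 0 < d) (s : ℕ)
    (hs : ∀ t : ℕ, HasCliqueMinorBreadth G t (d : ℝ) → t ≤ s) :
    fracHadwiger G ≤ (Fintype.card V : ℝ) / (d : ℝ) + (d : ℝ) * (s : ℝ) := by
  refine Real.sSup_le ?_ (by positivity)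
  rintro _ ⟨B, w, hB, hw, rfl⟩
  set small := B.filter fun A => #A ≤ d
  set large := B.filter fun A => ¬#A ≤ d
  obtain ⟨T, hTsmall, hTdisj, hThit⟩ := exists_pairwiseDisjoint_subset_forall_not_disjoint small
    fun A hA => hB.nonempty_of_mem (filter_subset _ B hA)
  have hT : #T ≤ s := hs _ <| hB.hasCliqueMinorBreadth (hTsmall.trans (filter_subset _ B)) hTdisj
    fun A hA => by exact_mod_cast (mem_filter.mp (hTsmall hA)).2
  have hsmall : ∑ A ∈ small, w A ≤ d * s :=
    calc ∑ A ∈ small, w A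
        ≤ #(T.biUnion id) := hw.sum_le_card_of_forall_not_disjoint (filter_subset _ B)
          fun A hA => by
            obtain ⟨C, hC, hAC⟩ := hThit A hA
            exact fun h => hAC (h.mono_right (subset_biUnion_of_mem id hC))
      _ ≤ ∑ C ∈ T, (#C : ℝ) := by exact_mod_cast card_biUnion_le
      _ ≤ ∑ _C ∈ T, (d : ℝ) := sum_le_sum fun C hC => by
          exact_mod_cast (mem_filter.mp (hTsmall hC)).2
      _ ≤ d * s := by
          rw [sum_const, nsmul_eq_mul, mul_comm]
          gcongr
  have hlarge : ∑ A ∈ large, w A ≤ Fintype.card V / d := by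
    rw [le_div_iff₀' (by exact_mod_cast hd)]
    exact hw.mul_sum_le_card_of_le_card (filter_subset _ B) fun A hA =>
      (not_le.mp (mem_filter.mp hA).2).le
  rw [← sum_filter_add_sum_filter_not B fun A => #A ≤ d]
  linarith
end
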